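/- A fiber A_τ of a modular family of fake elliptic curves π: M → C does not split in M; more precisely, the inclusion H⁰(A_τ, N*_{A_τ/M}) → H⁰(A_τ, ι*Ω¹_M) induced by the conormal sequence is an isomorphism, where both spaces are 1-dimensional, while any holomorphic splitting of the tangent bundle sequence would force h⁰(A_τ, ι*Ω¹_M) ≥ 3. -/

import Mathlib

/-!
Holomorphic sections of `ι*Ω¹_M` over `A_τ` are `ρ`-equivariant holomorphic maps
`f = (f₁, f₂, f₃) : ℂ² → ℂ³`. Since `Im τ > 0`, the periods of an additive basis of `O_B` form an
`ℝ`-basis of `ℂ²`; so `f₁`, `f₂` are periodic for a lattice, bounded by compactness of the torus,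
and constant by Liouville, say `a` and `c`. Then `f₃` changes by the constant `-λ₁₁ a - λ₂₁ c` under
the period of `λ`, so `z ↦ f₃ (z + w) - f₃ z` is again periodic, hence constant: `f₃ - f₃ 0` is
additive and holomorphic, hence `ℂ`-linear, say `L`. As `L (λ_τ) = -λ₁₁ a - λ₂₁ c` extends
`ℝ`-linearly to all of `M₂(ℝ)`, we get `-a = L (τ, 0) = τ L (1, 0) = 0` and likewise `c = 0`, so `f₃`
is periodic and constant too. A splitting would give a section with `f₁ = 1`.
-/

/-- The period `λ_τ = λ·(τ,1)ᵗ ∈ ℂ²` of `λ ∈ M₂(ℝ)`. -/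
noncomputable def period (τ : ℂ) (m : Matrix (Fin 2) (Fin 2) ℝ) : ℂ × ℂ :=
  ((m 0 0 : ℂ) * τ + (m 0 1 : ℂ), (m 1 0 : ℂ) * τ + (m 1 1 : ℂ))

/-- `f : ℂ² → ℂ³` transforms under `O_B` according to the factor of
automorphy `ρ` of `ι*Ω¹_M` restricted to the fiber `A_τ`. -/
def RhoEquivariant (O : Subring (Matrix (Fin 2) (Fin 2) ℝ)) (τ : ℂ)
    (f : ℂ × ℂ → ℂ × ℂ × ℂ) : Prop :=
  ∀ m ∈ O, ∀ z : ℂ × ℂ,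
    (f (z + period τ m)).1 = (f z).1 ∧
    (f (z + period τ m)).2.1 = (f z).2.1 ∧
    (f (z + period τ m)).2.2
      = -(m 0 0 : ℂ) * (f z).1 - (m 1 0 : ℂ) * (f z).2.1 + (f z).2.2

open Bornology Set Module Function

section PeriodicHolomorphic

variable {E F ι : Type*} [Fintype ι]

theorem isBounded_range_of_periodic_basis [NormedAddCommGroup E] [NormedSpace ℝ E]
    [PseudoMetricSpace F] (b : Basis ι ℝ E) {g : E → F} (hg : Continuous g)
    (hper : ∀ i, Periodic g (b i)) : IsBounded (range g) := by
  have : FiniteDimensional ℝ E := b.finiteDimensional_of_finite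
  have hspan : ∀ v ∈ Submodule.span ℤ (range b), Periodic g v := by
    intro v hv
    induction hv using Submodule.span_induction with
    | mem _ hv => obtain ⟨i, rfl⟩ := hv; exact hper i
    | zero => exact fun z => by rw [add_zero]
    | add _ _ _ _ hv hw => exact hv.add_period hw
    | smul n _ _ hv => exact hv.zsmul n
  refine (((ZSpan.fundamentalDomain_isBounded b).isCompact_closure).image hg).isBounded.subset ?_
  rintro _ ⟨z, rfl⟩
  exact ⟨ZSpan.fract b z, subset_closure (ZSpan.fract_mem_fundamentalDomain b z),
    (hspan _ (ZSpan.floor b z).2).sub_eq z⟩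

variable [NormedAddCommGroup E] [NormedSpace ℂ E] [NormedAddCommGroup F] [NormedSpace ℂ F]

theorem Differentiable.apply_eq_apply_of_periodic_basis (b : Basis ι ℝ E) {g : E → F}
    (hg : Differentiable ℂ g) (hper : ∀ i, Periodic g (b i)) (z w : E) : g z = g w :=
  hg.apply_eq_apply_of_bounded (isBounded_range_of_periodic_basis b hg.continuous hper) z w

theorem Differentiable.fderiv_zero_apply_of_map_add {g : E → F} (hg : Differentiable ℂ g)
    (hadd : ∀ z w, g (z + w) = g z + g w) (z : E) : fderiv ℂ g 0 z = g z := by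
  -- `g` is `ℝ`-linear, hence its own real derivative; uniqueness identifies it with the complex one.
  let L : E →L[ℝ] F := (AddMonoidHom.mk' g hadd).toRealLinearMap hg.continuous
  have h : (fderiv ℂ g 0).restrictScalars ℝ = L :=
    ((hg 0).hasFDerivAt.restrictScalars ℝ).unique L.hasFDerivAt
  exact congr($h z)

theorem Differentiable.apply_eq_add_fderiv_zero_of_add_basis (b : Basis ι ℝ E) {g : E → F}
    (hg : Differentiable ℂ g) (c : ι → F) (hc : ∀ i z, g (z + b i) = g z + c i) (z : E) :
    g z = g 0 + fderiv ℂ g 0 z := by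
  have hdiff : ∀ z w, g (z + w) - g z = g w - g 0 := fun z w => by
    have hper : ∀ i, Periodic (fun z => g (z + w) - g z) (b i) := fun i z => by
      simp only [add_right_comm z (b i) w, hc]
      abel
    simpa using ((hg.comp (differentiable_id.add_const w)).sub hg).apply_eq_apply_of_periodic_basis
      b hper z 0
  have hG := (hg.sub_const (g 0)).fderiv_zero_apply_of_map_add (fun z w => by
    rw [← hdiff z w]
    abel) z
  rw [fderiv_sub_const] at hG
  rw [hG]
  abel

end PeriodicHolomorphic

noncomputable def periodLinearMap (τ : ℂ) : Matrix (Fin 2) (Fin 2) ℝ →ₗ[ℝ] ℂ × ℂ where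
  toFun := period τ
  map_add' m n := by
    simp only [period, Matrix.add_apply, Prod.mk_add_mk, Complex.ofReal_add]
    congr 1 <;> ring
  map_smul' r m := by
    simp only [period, Matrix.smul_apply, smul_eq_mul, Complex.ofReal_mul, RingHom.id_apply,
      Prod.smul_mk, Complex.real_smul]
    congr 1 <;> ring

theorem periodLinearMap_injective {τ : ℂ} (hτ : 0 < τ.im) :
    Injective (periodLinearMap τ) := by
  refine (injective_iff_map_eq_zero _).2 fun m hm => ?_
  simp only [periodLinearMap, LinearMap.coe_mk, AddHom.coe_mk, period, Prod.mk_eq_zero,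
    Complex.ext_iff, Complex.add_re, Complex.add_im, Complex.mul_re, Complex.mul_im,
    Complex.ofReal_re, Complex.ofReal_im, Complex.zero_re, Complex.zero_im] at hm
  have h00 : m 0 0 = 0 := by simpa [hτ.ne'] using hm.1.2
  have h10 : m 1 0 = 0 := by simpa [hτ.ne'] using hm.2.2
  ext i j
  fin_cases i <;> fin_cases j <;> simp_all

noncomputable def periodBasis {τ : ℂ} (hτ : 0 < τ.im) {gens : Fin 4 → Matrix (Fin 2) (Fin 2) ℝ}
    (hindep : LinearIndependent ℝ gens) : Basis (Fin 4) ℝ (ℂ × ℂ) :=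
  basisOfLinearIndependentOfCardEqFinrank
    (hindep.map' _ (LinearMap.ker_eq_bot.2 (periodLinearMap_injective hτ)))
    (by simp [finrank_prod, Complex.finrank_real_complex])

theorem periodBasis_apply {τ : ℂ} (hτ : 0 < τ.im) {gens : Fin 4 → Matrix (Fin 2) (Fin 2) ℝ}
    (hindep : LinearIndependent ℝ gens) (i : Fin 4) :
    periodBasis hτ hindep i = period τ (gens i) := by
  simp [periodBasis, periodLinearMap]

noncomputable def rhoCocycle (a c : ℂ) : Matrix (Fin 2) (Fin 2) ℝ →ₗ[ℝ] ℂ where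
  toFun m := -(m 0 0 : ℂ) * a - (m 1 0 : ℂ) * c
  map_add' m n := by
    simp only [Matrix.add_apply, Complex.ofReal_add]
    ring
  map_smul' r m := by
    simp only [Matrix.smul_apply, smul_eq_mul, Complex.ofReal_mul, RingHom.id_apply,
      Complex.real_smul]
    ring

theorem eq_zero_of_map_period_eq_rhoCocycle {τ a c : ℂ} (L : ℂ × ℂ →L[ℂ] ℂ)
    (h : ∀ m, L (period τ m) = rhoCocycle a c m) : a = 0 ∧ c = 0 := by
  have h₀₀ : L (τ, 0) = -a := by simpa [period, rhoCocycle] using h !![1, 0; 0, 0]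
  have h₀₁ : L (1, 0) = 0 := by simpa [period, rhoCocycle] using h !![0, 1; 0, 0]
  have h₁₀ : L (0, τ) = -c := by simpa [period, rhoCocycle] using h !![0, 0; 1, 0]
  have h₁₁ : L (0, 1) = 0 := by simpa [period, rhoCocycle] using h !![0, 0; 0, 1]
  have hτ₁ : ((τ, 0) : ℂ × ℂ) = τ • ((1 : ℂ), (0 : ℂ)) := by simp
  have hτ₂ : ((0, τ) : ℂ × ℂ) = τ • ((0 : ℂ), (1 : ℂ)) := by simp
  rw [hτ₁, L.map_smul, h₀₁, smul_zero] at h₀₀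
  rw [hτ₂, L.map_smul, h₁₁, smul_zero] at h₁₀
  exact ⟨neg_eq_zero.1 h₀₀.symm, neg_eq_zero.1 h₁₀.symm⟩

theorem RhoEquivariant.exists_eq_const {O : Subring (Matrix (Fin 2) (Fin 2) ℝ)} {τ : ℂ}
    (hτ : 0 < τ.im) {gens : Fin 4 → Matrix (Fin 2) (Fin 2) ℝ} (hindep : LinearIndependent ℝ gens)
    (hgens : ∀ i, gens i ∈ O) {f : ℂ × ℂ → ℂ × ℂ × ℂ} (hf : Differentiable ℂ f)
    (hρ : RhoEquivariant O τ f) : ∃ b : ℂ, ∀ z, f z = (0, 0, b) := by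
  set P := periodBasis hτ hindep
  have hP : ∀ i, P i = period τ (gens i) := periodBasis_apply hτ hindep
  have h₁ : ∀ z, (f z).1 = (f 0).1 := fun z => hf.fst.apply_eq_apply_of_periodic_basis P
    (fun i w => by rw [hP]; exact (hρ _ (hgens i) w).1) z 0
  have h₂ : ∀ z, (f z).2.1 = (f 0).2.1 := fun z => hf.snd.fst.apply_eq_apply_of_periodic_basis P
    (fun i w => by rw [hP]; exact (hρ _ (hgens i) w).2.1) z 0
  have hquasi : ∀ i z, (f (z + P i)).2.2
      = (f z).2.2 + rhoCocycle (f 0).1 (f 0).2.1 (gens i) := fun i z => by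
    rw [hP, (hρ _ (hgens i) z).2.2, h₁, h₂]
    simp only [rhoCocycle, LinearMap.coe_mk, AddHom.coe_mk]
    ring
  have haffine := hf.snd.snd.apply_eq_add_fderiv_zero_of_add_basis P _ hquasi
  obtain ⟨ha, hc⟩ : (f 0).1 = 0 ∧ (f 0).2.1 = 0 := by
    set L := fderiv ℂ (fun z => (f z).2.2) 0
    have hL : (L.restrictScalars ℝ).toLinearMap ∘ₗ periodLinearMap τ
        = rhoCocycle (f 0).1 (f 0).2.1 :=
      (basisOfLinearIndependentOfCardEqFinrank hindep (by simp [finrank_matrix])).ext fun i => by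
        have := haffine (P i)
        rw [← zero_add (P i), hquasi, zero_add] at this
        simpa [hP, periodLinearMap] using this.symm
    exact eq_zero_of_map_period_eq_rhoCocycle L fun m => congr($hL m)
  have h₃ : ∀ z, (f z).2.2 = (f 0).2.2 := fun z => hf.snd.snd.apply_eq_apply_of_periodic_basis P
    (fun i w => by simp [hquasi, ha, hc, rhoCocycle]) z 0
  exact ⟨(f 0).2.2, fun z => Prod.ext ((h₁ z).trans ha) (Prod.ext ((h₂ z).trans hc) (h₃ z))⟩

theorem fiber_of_fake_elliptic_family_does_not_split_general
    (O : Subring (Matrix (Fin 2) (Fin 2) ℝ))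
    (gens : Fin 4 → Matrix (Fin 2) (Fin 2) ℝ)
    (hindep : LinearIndependent ℝ gens)
    (hOgen : O.toAddSubgroup = AddSubgroup.closure (Set.range gens))
    (τ : ℂ) (hτ : 0 < τ.im) :
    (∀ f : ℂ × ℂ → ℂ × ℂ × ℂ, Differentiable ℂ f → RhoEquivariant O τ f →
      ∃ b : ℂ, ∀ z, f z = (0, 0, b)) ∧
    ¬ ∃ s₁ s₂ : ℂ × ℂ → ℂ × ℂ × ℂ,
        Differentiable ℂ s₁ ∧ Differentiable ℂ s₂ ∧
        RhoEquivariant O τ s₁ ∧ RhoEquivariant O τ s₂ ∧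
        (∀ z, (s₁ z).1 = 1 ∧ (s₁ z).2.1 = 0) ∧
        (∀ z, (s₂ z).1 = 0 ∧ (s₂ z).2.1 = 1) := by
  have hgens : ∀ i, gens i ∈ O := fun i =>
    show gens i ∈ O.toAddSubgroup from hOgen ▸ AddSubgroup.subset_closure ⟨i, rfl⟩
  have hsections : ∀ f : ℂ × ℂ → ℂ × ℂ × ℂ, Differentiable ℂ f → RhoEquivariant O τ f →
      ∃ b : ℂ, ∀ z, f z = (0, 0, b) := fun _ hf hρ =>
    hρ.exists_eq_const hτ hindep hgens hf
  refine ⟨hsections, ?_⟩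
  rintro ⟨s₁, -, hs₁, -, hρ₁, -, hframe₁, -⟩
  obtain ⟨b, hb⟩ := hsections s₁ hs₁ hρ₁
  simpa [hb] using (hframe₁ 0).1

theorem fiber_of_fake_elliptic_family_does_not_split
    (B : Subalgebra ℚ (Matrix (Fin 2) (Fin 2) ℝ))
    (hdim : Module.finrank ℚ B = 4)
    (hdiv : ∀ x ∈ B, x ≠ 0 → ∃ y ∈ B, x * y = 1 ∧ y * x = 1)
    (O : Subring (Matrix (Fin 2) (Fin 2) ℝ))
    (hOB : (O : Set (Matrix (Fin 2) (Fin 2) ℝ)) ⊆ (B : Set (Matrix (Fin 2) (Fin 2) ℝ)))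
    (gens : Fin 4 → Matrix (Fin 2) (Fin 2) ℝ)
    (hindep : LinearIndependent ℝ gens)
    (hOgen : O.toAddSubgroup = AddSubgroup.closure (Set.range gens))
    (τ : ℂ) (hτ : 0 < τ.im) :
    (∀ f : ℂ × ℂ → ℂ × ℂ × ℂ, Differentiable ℂ f → RhoEquivariant O τ f →
      ∃ b : ℂ, ∀ z, f z = (0, 0, b)) ∧
    ¬ ∃ s₁ s₂ : ℂ × ℂ → ℂ × ℂ × ℂ,
        Differentiable ℂ s₁ ∧ Differentiable ℂ s₂ ∧
        RhoEquivariant O τ s₁ ∧ RhoEquivariant O τ s₂ ∧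
        (∀ z, (s₁ z).1 = 1 ∧ (s₁ z).2.1 = 0) ∧
        (∀ z, (s₂ z).1 = 0 ∧ (s₂ z).2.1 = 1) :=
  fiber_of_fake_elliptic_family_does_not_split_general O gens hindep hOgen τ hτ
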